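/- arXiv:0805.3997 — 3 statements merged into one kernel-verified Lean document; each statement's English description precedes it below -/
import Mathlib

section
/- Let $k$ be a perfect field of characteristic $p>0$, $A = k[x,y]$, and let $A^p \subseteq A$ be the $k$-subalgebra generated by $x^p$, $y^p$, and $xy$. Then $A^p$ is isomorphic to $k[X,Y,t]/(XY - t^p)$ via $X \mapsto x^p$, $Y \mapsto y^p$, $t \mapsto xy$. -/
/-!
Write `k[X, Y, t] = R[t]` with `R = k[X, Y]`. The evaluation `X ↦ x^p, Y ↦ y^p, t ↦ xy`
restricts to `R` as the injective map `expand p` and kills the monic polynomial `t^p - XY`.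
Dividing by it reduces every element of the kernel to a remainder `∑_{i<p} rᵢ tⁱ`, which maps
to `∑_{i<p} expand p (rᵢ) (xy)ⁱ`. In the `i`-th summand every exponent of `x` is `≡ i`
(mod p), so the summands have disjoint supports and the remainder must vanish.
-/

open MvPolynomial

namespace MvPolynomial

variable {R σ : Type*} [CommRing R] {p : ℕ} {u : σ →₀ ℕ} {j : σ}

lemma coeff_expand_mul_monomial_nsmul_self (hp : p ≠ 0) (f : MvPolynomial σ R)
    (ν : σ →₀ ℕ) (i : ℕ) :
    coeff (p • ν + i • u) (expand p f * monomial (i • u) 1) = coeff ν f := by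
  rw [coeff_mul_monomial, mul_one, coeff_expand_smul p hp]

lemma coeff_expand_mul_monomial_nsmul_of_ne (hj : u j = 1) {i i₀ : ℕ} (hi : i < p)
    (hi₀ : i₀ < p) (hne : i ≠ i₀) (f : MvPolynomial σ R) (ν : σ →₀ ℕ) :
    coeff (p • ν + i₀ • u) (expand p f * monomial (i • u) 1) = 0 := by
  classical
  rw [coeff_mul_monomial']
  split_ifs with hle
  · rw [mul_one]
    refine coeff_expand_of_not_dvd f (i := j) ?_
    have hle_j : i ≤ p * ν j + i₀ := by simpa [hj] using hle j
    simp only [Finsupp.tsub_apply, Finsupp.add_apply, Finsupp.smul_apply, smul_eq_mul, hj,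
      mul_one]
    rintro ⟨c, hc⟩
    have hmod := congrArg (· % p) (show p * c + i = p * ν j + i₀ by omega)
    simp only [Nat.mul_add_mod, Nat.mod_eq_of_lt hi, Nat.mod_eq_of_lt hi₀] at hmod
    exact hne hmod
  · rfl

lemma eq_zero_of_eval₂_expand_monomial_eq_zero (hp : p ≠ 0) (hj : u j = 1)
    {r : Polynomial (MvPolynomial σ R)} (hr : r.natDegree < p)
    (h : r.eval₂ (expand p : MvPolynomial σ R →ₐ[R] _).toRingHom (monomial u 1) = 0) :
    r = 0 := by
  ext i₀ ν
  by_cases hi₀ : i₀ < p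
  · have := congrArg (coeff (p • ν + i₀ • u)) h
    rw [Polynomial.eval₂_eq_sum_range' _ hr, coeff_sum,
      Finset.sum_eq_single_of_mem i₀ (Finset.mem_range.2 hi₀)] at this
    · simpa [monomial_pow, coeff_expand_mul_monomial_nsmul_self hp] using this
    · intro i hi hne
      simpa [monomial_pow] using
        coeff_expand_mul_monomial_nsmul_of_ne hj (Finset.mem_range.1 hi) hi₀ hne _ ν
  · rw [Polynomial.coeff_eq_zero_of_natDegree_lt (by omega), Polynomial.coeff_zero]

lemma ker_eval₂RingHom_expand_monomial (hp : p ≠ 0) (hj : u j = 1) :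
    RingHom.ker (Polynomial.eval₂RingHom
        (expand p : MvPolynomial σ R →ₐ[R] _).toRingHom (monomial u 1)) =
      Ideal.span {Polynomial.X ^ p - Polynomial.C (monomial u 1)} := by
  set ev := Polynomial.eval₂RingHom
    (expand p : MvPolynomial σ R →ₐ[R] _).toRingHom (monomial u 1)
  set g := Polynomial.X ^ p - Polynomial.C (monomial u 1 : MvPolynomial σ R)
  have hg : g.Monic := Polynomial.monic_X_pow_sub_C _ hp
  have hg_ker : g ∈ RingHom.ker ev := by simp [ev, g, monomial_pow]
  refine le_antisymm (fun G hG => ?_) ((Ideal.span_singleton_le_iff_mem _).2 hg_ker)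
  rw [Ideal.mem_span_singleton, ← Polynomial.modByMonic_eq_zero_iff_dvd hg]
  nontriviality MvPolynomial σ R
  refine eq_zero_of_eval₂_expand_monomial_eq_zero hp hj ?_ ?_
  · have hdeg : g.natDegree = p := Polynomial.natDegree_X_pow_sub_C
    have hg1 : g ≠ 1 := fun h => hp (by rw [← hdeg, h, Polynomial.natDegree_one])
    exact hdeg ▸ Polynomial.natDegree_modByMonic_lt G hg hg1
  · change G %ₘ g ∈ RingHom.ker ev
    rw [Polynomial.modByMonic_eq_sub_mul_div G g]
    exact sub_mem hG (Ideal.mul_mem_right _ _ hg_ker)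

end MvPolynomial

section ThreeVariables

variable {R : Type*} [CommRing R]

noncomputable def finRotateSuccEquiv :
    MvPolynomial (Fin 3) R ≃ₐ[R] Polynomial (MvPolynomial (Fin 2) R) :=
  (renameEquiv R (finRotate 3)).trans (finSuccEquiv R 2)

lemma finRotateSuccEquiv_X_zero :
    finRotateSuccEquiv (X 0 : MvPolynomial (Fin 3) R) = Polynomial.C (X 0) := by
  rw [finRotateSuccEquiv, AlgEquiv.trans_apply, renameEquiv_apply, rename_X,
    show finRotate 3 0 = Fin.succ 0 from rfl, finSuccEquiv_X_succ]

lemma finRotateSuccEquiv_X_one :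
    finRotateSuccEquiv (X 1 : MvPolynomial (Fin 3) R) = Polynomial.C (X 1) := by
  rw [finRotateSuccEquiv, AlgEquiv.trans_apply, renameEquiv_apply, rename_X,
    show finRotate 3 1 = Fin.succ 1 from rfl, finSuccEquiv_X_succ]

lemma finRotateSuccEquiv_X_two :
    finRotateSuccEquiv (X 2 : MvPolynomial (Fin 3) R) = Polynomial.X := by
  rw [finRotateSuccEquiv, AlgEquiv.trans_apply, renameEquiv_apply, rename_X,
    show finRotate 3 2 = 0 from rfl, finSuccEquiv_X_zero]

lemma aeval_pow_pow_mul_eq_eval₂_comp (p : ℕ) :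
    (aeval ![X 0 ^ p, X 1 ^ p, X 0 * X 1] :
        MvPolynomial (Fin 3) R →ₐ[R] MvPolynomial (Fin 2) R).toRingHom =
      (Polynomial.eval₂RingHom (expand p : MvPolynomial (Fin 2) R →ₐ[R] _).toRingHom
        (X 0 * X 1)).comp (finRotateSuccEquiv (R := R)).toRingHom := by
  refine MvPolynomial.ringHom_ext (fun r => ?_) (fun i => ?_)
  · have hC := (finRotateSuccEquiv (R := R)).commutes r
    simp only [MvPolynomial.algebraMap_eq, Polynomial.algebraMap_apply] at hC
    simp [hC]
  · fin_cases i <;>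
      simp [finRotateSuccEquiv_X_zero, finRotateSuccEquiv_X_one, finRotateSuccEquiv_X_two]

lemma X_zero_mul_X_one_eq_monomial :
    (X 0 * X 1 : MvPolynomial (Fin 2) R) =
      monomial (Finsupp.single 0 1 + Finsupp.single 1 1) 1 := by
  rw [X, X, monomial_mul, one_mul]

lemma ker_aeval_pow_pow_mul {p : ℕ} (hp : p ≠ 0) :
    RingHom.ker (aeval ![X 0 ^ p, X 1 ^ p, X 0 * X 1] :
        MvPolynomial (Fin 3) R →ₐ[R] MvPolynomial (Fin 2) R) =
      Ideal.span {X 0 * X 1 - X 2 ^ p} := by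
  set Φ := finRotateSuccEquiv (R := R)
  have hΦ : Φ (X 2 ^ p - X 0 * X 1) =
      Polynomial.X ^ p - Polynomial.C (monomial (Finsupp.single 0 1 + Finsupp.single 1 1) 1) := by
    simp [Φ, finRotateSuccEquiv_X_zero, finRotateSuccEquiv_X_one, finRotateSuccEquiv_X_two,
      ← X_zero_mul_X_one_eq_monomial]
  calc RingHom.ker (aeval ![X 0 ^ p, X 1 ^ p, X 0 * X 1] :
        MvPolynomial (Fin 3) R →ₐ[R] MvPolynomial (Fin 2) R)
      = (RingHom.ker (Polynomial.eval₂RingHom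
          (expand p : MvPolynomial (Fin 2) R →ₐ[R] _).toRingHom (X 0 * X 1))).comap Φ :=
        (congrArg RingHom.ker (aeval_pow_pow_mul_eq_eval₂_comp p)).trans
          (RingHom.comap_ker _ _).symm
    _ = ((Ideal.span {X 2 ^ p - X 0 * X 1}).map Φ).comap Φ := by
        rw [X_zero_mul_X_one_eq_monomial,
          ker_eval₂RingHom_expand_monomial hp (j := 0) (by simp), Ideal.map_span,
          Set.image_singleton, hΦ]
    _ = Ideal.span {X 0 * X 1 - X 2 ^ p} := by
        rw [Ideal.comap_map_of_bijective _ Φ.bijective, ← Ideal.span_singleton_neg, neg_sub]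

end ThreeVariables

theorem subalgebra_iso_quotient_general
    (k : Type) [Field k] (p : ℕ) [Fact p.Prime] :
    let A := MvPolynomial (Fin 2) k
    let x : A := X 0
    let y : A := X 1
    let Ap : Subalgebra k A := Algebra.adjoin k {x ^ p, y ^ p, x * y}
    let I : Ideal (MvPolynomial (Fin 3) k) :=
      Ideal.span {(X 0 : MvPolynomial (Fin 3) k) * X 1 - (X 2) ^ p}
    ∃ e : (MvPolynomial (Fin 3) k ⧸ I) ≃ₐ[k] Ap,
      ((e (Ideal.Quotient.mk I (X 0)) : Ap) : A) = x ^ p ∧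
      ((e (Ideal.Quotient.mk I (X 1)) : Ap) : A) = y ^ p ∧
      ((e (Ideal.Quotient.mk I (X 2)) : Ap) : A) = x * y := by
  intro A x y Ap I
  set f : MvPolynomial (Fin 3) k →ₐ[k] A := aeval ![x ^ p, y ^ p, x * y]
  have hI : I = RingHom.ker f := (ker_aeval_pow_pow_mul (Fact.out : p.Prime).ne_zero).symm
  have hAp : f.range = Ap := by
    rw [← Algebra.adjoin_range_eq_range_aeval]
    simp only [Matrix.range_cons, Matrix.range_empty, Set.union_empty, Set.singleton_union, Ap]
  refine ⟨(Ideal.quotientEquivAlgOfEq k hI).trans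
    ((Ideal.quotientKerEquivRange f).trans (Subalgebra.equivOfEq _ _ hAp)), ?_, ?_, ?_⟩ <;>
    simp [Ideal.quotientKerEquivRange, Ideal.quotientKerAlgEquivOfSurjective_mk, f]

/-- Let `k` be a perfect field of characteristic `p > 0`,
`A = k[x,y]`, and let `Aᵖ ⊆ A` be the `k`-subalgebra generated by `x^p`, `y^p`
and `x*y`.  Then `Aᵖ` is isomorphic to `k[X,Y,t]/(XY - t^p)` via
`X ↦ x^p`, `Y ↦ y^p`, `t ↦ x*y`. -/
theorem subalgebra_iso_quotient
    (k : Type) [Field k] (p : ℕ) [Fact p.Prime] [CharP k p] [PerfectRing k p] :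
    let A := MvPolynomial (Fin 2) k
    let x : A := X 0
    let y : A := X 1
    let Ap : Subalgebra k A := Algebra.adjoin k {x ^ p, y ^ p, x * y}
    let I : Ideal (MvPolynomial (Fin 3) k) :=
      Ideal.span {(X 0 : MvPolynomial (Fin 3) k) * X 1 - (X 2) ^ p}
    ∃ e : (MvPolynomial (Fin 3) k ⧸ I) ≃ₐ[k] Ap,
      ((e (Ideal.Quotient.mk I (X 0)) : Ap) : A) = x ^ p ∧
      ((e (Ideal.Quotient.mk I (X 1)) : Ap) : A) = y ^ p ∧
      ((e (Ideal.Quotient.mk I (X 2)) : Ap) : A) = x * y :=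
  subalgebra_iso_quotient_general k p
end

section
/- Let $k$ be a perfect field of characteristic $p>0$, $A = k[x,y]$, and $A^p \subseteq A$ the $k$-subalgebra generated by $x^p, y^p, xy$. Then the quotient $A/A^p$ is generated as an $A^p$-module by the images of $x, x^2, \ldots, x^{p-1}, y, y^2, \ldots, y^{p-1}$. -/
/-!
Every monomial `x ^ n * y ^ m` with `m ≤ n` factors as `(x * y) ^ m * (x ^ p) ^ q * x ^ r` with
`r < p`, i.e. as an element of `Aᵖ` times one of `1, x, …, x ^ (p - 1)`; symmetrically when
`n ≤ m`. Hence `1, x, …, x ^ (p - 1), y, …, y ^ (p - 1)` span `A` over `Aᵖ`, and `1` dies in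
the quotient.
-/

open MvPolynomial Set

section

variable {R A : Type*} [CommSemiring R] [CommSemiring A] [Algebra R A] (S : Subalgebra R A)

theorem Subalgebra.mul_mem_span {T : Set A} {u v : A} (hu : u ∈ S)
    (hv : v ∈ Submodule.span S T) : u * v ∈ Submodule.span S T :=
  (Submodule.span S T).smul_mem ⟨u, hu⟩ hv

theorem pow_mul_pow_mem_span_insert_one_pow_Ioo {a b : A} {p : ℕ} (hp : 0 < p)
    (hab : a * b ∈ S) (hap : a ^ p ∈ S) {m n : ℕ} (hmn : m ≤ n) :
    a ^ n * b ^ m ∈ Submodule.span S (insert 1 ((a ^ ·) '' Ioo 0 p)) := by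
  have hsplit : a ^ n * b ^ m = (a * b) ^ m * (a ^ p) ^ ((n - m) / p) * a ^ ((n - m) % p) := by
    conv_lhs => rw [← Nat.add_sub_cancel' hmn, ← Nat.div_add_mod (n - m) p]
    ring
  rw [hsplit]
  refine S.mul_mem_span (S.mul_mem (S.pow_mem hab m) (S.pow_mem hap _))
    (Submodule.subset_span ?_)
  rcases Nat.eq_zero_or_pos ((n - m) % p) with h | h
  · exact .inl (by rw [h, pow_zero])
  · exact .inr ⟨_, ⟨h, Nat.mod_lt _ hp⟩, rfl⟩

end

theorem MvPolynomial.span_adjoin_pow_pow_mul_eq_top {R : Type*} [CommSemiring R] {p : ℕ}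
    (hp : 0 < p) :
    Submodule.span (Algebra.adjoin R {(X 0 : MvPolynomial (Fin 2) R) ^ p, X 1 ^ p, X 0 * X 1})
      (insert 1 ((X 0 ^ ·) '' Ioo 0 p ∪ (X 1 ^ ·) '' Ioo 0 p) :
        Set (MvPolynomial (Fin 2) R)) = ⊤ := by
  set S := Algebra.adjoin R {(X 0 : MvPolynomial (Fin 2) R) ^ p, X 1 ^ p, X 0 * X 1}
  have hxy : X 0 * X 1 ∈ S := Algebra.subset_adjoin (by simp)
  have hmonomial (n m : ℕ) : (X 0 ^ n * X 1 ^ m : MvPolynomial (Fin 2) R) ∈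
      Submodule.span S (insert 1 ((X 0 ^ ·) '' Ioo 0 p ∪ (X 1 ^ ·) '' Ioo 0 p)) := by
    rcases le_total m n with h | h
    · exact Submodule.span_mono (insert_subset_insert subset_union_left)
        (pow_mul_pow_mem_span_insert_one_pow_Ioo S hp hxy (Algebra.subset_adjoin (by simp)) h)
    · rw [mul_comm]
      exact Submodule.span_mono (insert_subset_insert subset_union_right)
        (pow_mul_pow_mem_span_insert_one_pow_Ioo S hp (by rwa [mul_comm])
          (Algebra.subset_adjoin (by simp)) h)
  rw [Submodule.eq_top_iff']
  intro f
  rw [f.as_sum]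
  refine Submodule.sum_mem _ fun v _ => ?_
  rw [monomial_eq, Finsupp.prod_fintype _ _ (fun _ => pow_zero _), Fin.prod_univ_two]
  exact S.mul_mem_span (S.algebraMap_mem _) (hmonomial _ _)

set_option maxHeartbeats 1000000 in
set_option synthInstance.maxHeartbeats 400000 in
theorem quotient_module_generators_general
    (k : Type) [Field k] (p : ℕ) [Fact p.Prime] :
    let A := MvPolynomial (Fin 2) k
    let x : A := X 0
    let y : A := X 1
    let Ap : Subalgebra k A := Algebra.adjoin k {x ^ p, y ^ p, x * y}
    -- `A/Aᵖ` as an `Aᵖ`-module: quotient of `A` by the `Aᵖ`-submodule `Aᵖ·1`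
    let q : A → A ⧸ (Submodule.span (↥Ap) ({1} : Set A)) :=
      Submodule.Quotient.mk
    Submodule.span (↥Ap)
        ((fun i => q (x ^ i)) '' (Set.Ioo 0 p) ∪ (fun i => q (y ^ i)) '' (Set.Ioo 0 p))
      = ⊤ := by
  intro A x y Ap q
  have himage (z : A) : (fun i => q (z ^ i)) '' Ioo 0 p = q '' ((z ^ ·) '' Ioo 0 p) :=
    (image_image ..).symm
  have hq : q = (Submodule.span Ap {1}).mkQ := rfl
  rw [himage, himage, ← image_union, hq, ← Submodule.map_span,
    Submodule.map_mkQ_eq_top, ← Submodule.span_insert]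
  exact span_adjoin_pow_pow_mul_eq_top (Fact.out : p.Prime).pos

set_option maxHeartbeats 1000000 in
set_option synthInstance.maxHeartbeats 400000 in
/-- For a perfect field `k` of characteristic `p > 0`,
`A = k[x,y]` and `Aᵖ ⊆ A` the `k`-subalgebra generated by `x^p, y^p, xy`,
the quotient `A/Aᵖ` is generated as an `Aᵖ`-module by the images of
`x, x², …, x^(p-1), y, y², …, y^(p-1)`. -/
theorem quotient_module_generators
    (k : Type) [Field k] (p : ℕ) [Fact p.Prime] [CharP k p] [PerfectRing k p] :
    let A := MvPolynomial (Fin 2) k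
    let x : A := X 0
    let y : A := X 1
    let Ap : Subalgebra k A := Algebra.adjoin k {x ^ p, y ^ p, x * y}
    -- `A/Aᵖ` as an `Aᵖ`-module: quotient of `A` by the `Aᵖ`-submodule `Aᵖ·1`
    let q : A → A ⧸ (Submodule.span (↥Ap) ({1} : Set A)) :=
      Submodule.Quotient.mk
    Submodule.span (↥Ap)
        ((fun i => q (x ^ i)) '' (Set.Ioo 0 p) ∪ (fun i => q (y ^ i)) '' (Set.Ioo 0 p))
      = ⊤ :=
  quotient_module_generators_general k p
end

section
/- Let $k$ be a perfect field of characteristic $p>0$, $A = k[x,y]$, and $A^p \subseteq A$ the $k$-subalgebra generated by $x^p, y^p, xy$. Then $A/A^p$ decomposes as an $A^p$-module into the direct sum $\bigoplus_{i=1}^{p-1} M_i$, where $M_i$ is the $A^p$-submodule of $A/A^p$ generated by the images of $x^i$ and $y^{p-i}$. -/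
/-!
Grade `A = k[x,y]` by `ZMod p`, giving `x` degree `1` and `y` degree `-1`, so that `x^a y^b` has
degree `a - b`. The generators `x^p, y^p, xy` of `Aᵖ` have degree `0`, so the projection onto each
homogeneous component is `Aᵖ`-linear, and for a nonzero degree it kills `Aᵖ • 1` and descends to
`A/Aᵖ`. Both generators of `M_i` have degree `i`, so these projections separate the `M_i`.
Conversely a monomial `x^a y^b` of degree `0` lies in `Aᵖ`, and one of degree `i ≠ 0` is an
`Aᵖ`-multiple of `x^i` if `a ≥ i` and of `y^(p-i)` otherwise.
-/

open MvPolynomial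

theorem iSupIndep_of_projections {ι R M : Type*} [Semiring R] [AddCommMonoid M] [Module R M]
    {N : ι → Submodule R M} (π : ι → M →ₗ[R] M) (hfix : ∀ i, ∀ v ∈ N i, π i v = v)
    (hzero : ∀ i j, j ≠ i → ∀ v ∈ N j, π i v = 0) : iSupIndep N := by
  refine fun i => Submodule.disjoint_def.mpr fun v hvi hv => ?_
  have hker : (⨆ j, ⨆ (_ : j ≠ i), N j) ≤ LinearMap.ker (π i) :=
    iSup₂_le fun j hj w hw => hzero i j hj w hw
  rw [← hfix i v hvi]
  exact hker hv

theorem Submodule.mul_mem_of_mem_subalgebra {R A : Type*} [CommSemiring R] [Semiring A]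
    [Algebra R A] {S : Subalgebra R A} (N : Submodule S A) {g a : A} (hg : g ∈ S) (ha : a ∈ N) :
    g * a ∈ N :=
  N.smul_mem ⟨g, hg⟩ ha

namespace GradedAlgebra

open DirectSum

variable {ι R A : Type*} [DecidableEq ι] [AddMonoid ι]

section Semiring

variable [CommSemiring R] [Semiring A] [Algebra R A] (𝒜 : ι → Submodule R A) [GradedAlgebra 𝒜]
  {S : Subalgebra R A}

def linearProj (hS : Subalgebra.toSubmodule S ≤ 𝒜 0) (i : ι) : A →ₗ[S] A where
  toFun := GradedRing.proj 𝒜 i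
  map_add' := map_add _
  map_smul' s _ := coe_decompose_mul_of_left_mem_zero 𝒜 (hS s.2)

theorem linearProj_of_mem (hS : Subalgebra.toSubmodule S ≤ 𝒜 0) {i j : ι} {a : A}
    (ha : a ∈ 𝒜 j) : linearProj 𝒜 hS i a = if j = i then a else 0 := by
  split_ifs with h
  · subst h
    exact decompose_of_mem_same 𝒜 ha
  · exact decompose_of_mem_ne 𝒜 ha h

end Semiring

variable [CommRing R] [Ring A] [Algebra R A] (𝒜 : ι → Submodule R A) [GradedAlgebra 𝒜]
  {S : Subalgebra R A}

def quotientProj (hS : Subalgebra.toSubmodule S ≤ 𝒜 0) (i : ι) (hi : i ≠ 0) :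
    (A ⧸ Submodule.span S {(1 : A)}) →ₗ[S] A ⧸ Submodule.span S {(1 : A)} :=
  Submodule.mapQ _ _ (linearProj 𝒜 hS i) <| Submodule.span_le.mpr <| by
    rintro _ rfl
    simp [linearProj_of_mem 𝒜 hS SetLike.GradedOne.one_mem, hi.symm]

theorem quotientProj_mk_of_mem (hS : Subalgebra.toSubmodule S ≤ 𝒜 0) {i j : ι} (hi : i ≠ 0)
    {a : A} (ha : a ∈ 𝒜 j) :
    quotientProj 𝒜 hS i hi (Submodule.Quotient.mk a) =
      if j = i then Submodule.Quotient.mk a else 0 := by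
  simp only [quotientProj, Submodule.mapQ_apply, linearProj_of_mem 𝒜 hS ha]
  split_ifs <;> simp

theorem quotientProj_of_mem_span (hS : Subalgebra.toSubmodule S ≤ 𝒜 0) {i j : ι} (hi : i ≠ 0)
    {T : Set (A ⧸ Submodule.span S {(1 : A)})} (hT : T ⊆ Submodule.Quotient.mk '' (𝒜 j : Set A))
    {v : A ⧸ Submodule.span S {(1 : A)}} (hv : v ∈ Submodule.span S T) :
    quotientProj 𝒜 hS i hi v = if j = i then v else 0 := by
  split_ifs with h
  · refine LinearMap.eqOn_span (g := LinearMap.id) (fun t ht => ?_) hv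
    obtain ⟨a, ha, rfl⟩ := hT ht
    simp [quotientProj_mk_of_mem 𝒜 hS hi ha, h]
  · refine LinearMap.eqOn_span (g := 0) (fun t ht => ?_) hv
    obtain ⟨a, ha, rfl⟩ := hT ht
    simp [quotientProj_mk_of_mem 𝒜 hS hi ha, h]

theorem iSupIndep_span_of_subset_mk_image (hS : Subalgebra.toSubmodule S ≤ 𝒜 0) {κ : Type*}
    (d : κ → ι) (hd : Function.Injective d) (hd0 : ∀ j, d j ≠ 0)
    (T : κ → Set (A ⧸ Submodule.span S {(1 : A)}))
    (hT : ∀ j, T j ⊆ Submodule.Quotient.mk '' (𝒜 (d j) : Set A)) :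
    iSupIndep fun j => Submodule.span S (T j) := by
  refine iSupIndep_of_projections (fun j => quotientProj 𝒜 hS (d j) (hd0 j)) ?_ ?_
  · intro j v hv
    simpa using quotientProj_of_mem_span 𝒜 hS (hd0 j) (hT j) hv
  · intro i j hji v hv
    simpa [hd.ne hji] using quotientProj_of_mem_span 𝒜 hS (hd0 i) (hT j) hv

end GradedAlgebra

section AdjoinPowers

variable {R A : Type*} [CommSemiring R] [CommSemiring A] [Algebra R A] {p : ℕ} (x y : A)

theorem pow_mul_pow_mem_adjoin {m n : ℕ} (h : (m : ZMod p) = n) :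
    x ^ m * y ^ n ∈ Algebra.adjoin R {x ^ p, y ^ p, x * y} := by
  have mem {g : A} (hg : g ∈ ({x ^ p, y ^ p, x * y} : Set A)) :
      g ∈ Algebra.adjoin R {x ^ p, y ^ p, x * y} := Algebra.subset_adjoin hg
  rcases le_total n m with hnm | hmn
  · obtain ⟨t, ht⟩ := (Nat.modEq_iff_dvd' hnm).mp ((ZMod.natCast_eq_natCast_iff _ _ _).mp h.symm)
    have : x ^ m * y ^ n = (x * y) ^ n * (x ^ p) ^ t := by
      rw [show m = n + p * t by omega]
      ring
    rw [this]
    exact mul_mem (pow_mem (mem (by simp)) n) (pow_mem (mem (by simp)) t)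
  · obtain ⟨t, ht⟩ := (Nat.modEq_iff_dvd' hmn).mp ((ZMod.natCast_eq_natCast_iff _ _ _).mp h)
    have : x ^ m * y ^ n = (x * y) ^ m * (y ^ p) ^ t := by
      rw [show n = m + p * t by omega]
      ring
    rw [this]
    exact mul_mem (pow_mem (mem (by simp)) m) (pow_mem (mem (by simp)) t)

theorem pow_mul_pow_mem_of_generators_mem [NeZero p]
    (N : Submodule (Algebra.adjoin R {x ^ p, y ^ p, x * y}) A) (h1 : (1 : A) ∈ N)
    (hgen : ∀ i, i + 1 < p → x ^ (i + 1) ∈ N ∧ y ^ (p - (i + 1)) ∈ N) (a b : ℕ) :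
    x ^ a * y ^ b ∈ N := by
  set c : ZMod p := a - b with hc
  by_cases hc0 : c = 0
  · simpa using N.mul_mem_of_mem_subalgebra (pow_mul_pow_mem_adjoin x y (sub_eq_zero.mp hc0)) h1
  obtain ⟨i, hi⟩ := Nat.exists_eq_add_one_of_ne_zero ((ZMod.val_ne_zero c).mpr hc0)
  have hip : i + 1 < p := hi ▸ ZMod.val_lt c
  have hic : ((i + 1 : ℕ) : ZMod p) = c := by rw [← hi, ZMod.natCast_zmod_val]
  rcases le_or_gt (i + 1) a with hia | hai
  · have hmem : x ^ (a - (i + 1)) * y ^ b ∈ Algebra.adjoin R {x ^ p, y ^ p, x * y} := by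
      refine pow_mul_pow_mem_adjoin x y ?_
      rw [Nat.cast_sub hia, hic, hc]
      ring
    convert N.mul_mem_of_mem_subalgebra hmem (hgen i hip).1 using 1
    rw [mul_right_comm, ← pow_add, Nat.sub_add_cancel hia]
  · have hb : (b : ZMod p) = (a + (p - (i + 1)) : ℕ) := by
      rw [Nat.cast_add, Nat.cast_sub hip.le, ZMod.natCast_self, hic, hc]
      ring
    -- `b ≡ a + (p - (i + 1))` with the right-hand side already reduced mod `p`
    have hib : p - (i + 1) ≤ b := by
      have hmod := congrArg ZMod.val hb
      rw [ZMod.val_natCast, ZMod.val_cast_of_lt (by omega)] at hmod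
      have := Nat.mod_le b p
      omega
    have hmem : x ^ a * y ^ (b - (p - (i + 1))) ∈ Algebra.adjoin R {x ^ p, y ^ p, x * y} := by
      refine pow_mul_pow_mem_adjoin x y ?_
      rw [Nat.cast_sub hib, hb, Nat.cast_add]
      ring
    convert N.mul_mem_of_mem_subalgebra hmem (hgen i hip).2 using 1
    rw [mul_assoc, ← pow_add, Nat.sub_add_cancel hib]

end AdjoinPowers

theorem ZMod.natCast_val_add_one_injective (p : ℕ) :
    Function.Injective fun j : Fin (p - 1) => ((j.1 + 1 : ℕ) : ZMod p) := by
  intro i j hij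
  have hval := congrArg ZMod.val hij
  simp only [ZMod.val_cast_of_lt (by omega : i.1 + 1 < p),
    ZMod.val_cast_of_lt (by omega : j.1 + 1 < p)] at hval
  exact Fin.ext (by omega)

theorem ZMod.natCast_val_add_one_ne_zero {p : ℕ} (j : Fin (p - 1)) :
    ((j.1 + 1 : ℕ) : ZMod p) ≠ 0 := by
  rw [Ne, ZMod.natCast_eq_zero_iff]
  exact Nat.not_dvd_of_pos_of_lt j.1.succ_pos (by omega)

namespace MvPolynomial

theorem submodule_eq_top_of_monomial_one_mem {σ R : Type*} [CommSemiring R]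
    {S : Subalgebra R (MvPolynomial σ R)} (N : Submodule S (MvPolynomial σ R))
    (h : ∀ d, monomial d 1 ∈ N) : N = ⊤ := by
  rw [eq_top_iff]
  rintro f -
  induction f using MvPolynomial.induction_on' with
  | monomial d c =>
    rw [← mul_one c, ← C_mul_monomial]
    exact N.mul_mem_of_mem_subalgebra (S.algebraMap_mem c) (h d)
  | add f g hf hg => exact N.add_mem hf hg

theorem monomial_one_fin_two {R : Type*} [CommSemiring R] (d : Fin 2 →₀ ℕ) :
    monomial d (1 : R) = X 0 ^ d 0 * X 1 ^ d 1 := by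
  rw [monomial_eq, C_1, one_mul, Finsupp.prod_fintype _ _ fun _ => pow_zero _, Fin.prod_univ_two]

variable (R : Type*) [CommSemiring R] (p : ℕ)

def diffWeight : Fin 2 → ZMod p := ![1, -1]

theorem isWeightedHomogeneous_X_zero_pow (n : ℕ) :
    IsWeightedHomogeneous (diffWeight p) (X 0 ^ n : MvPolynomial (Fin 2) R) n := by
  simpa [diffWeight] using (isWeightedHomogeneous_X R (diffWeight p) 0).pow n

theorem isWeightedHomogeneous_X_one_pow (n : ℕ) :
    IsWeightedHomogeneous (diffWeight p) (X 1 ^ n : MvPolynomial (Fin 2) R) (-n) := by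
  simpa [diffWeight] using (isWeightedHomogeneous_X R (diffWeight p) 1).pow n

theorem isWeightedHomogeneous_X_one_pow_sub {n : ℕ} (hn : n ≤ p) :
    IsWeightedHomogeneous (diffWeight p) (X 1 ^ (p - n) : MvPolynomial (Fin 2) R) n := by
  convert isWeightedHomogeneous_X_one_pow R p (p - n) using 1
  rw [Nat.cast_sub hn, ZMod.natCast_self, zero_sub, neg_neg]

theorem adjoin_le_weightedHomogeneousSubmodule_zero :
    Subalgebra.toSubmodule (Algebra.adjoin R {X 0 ^ p, X 1 ^ p, X 0 * X 1}) ≤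
      weightedHomogeneousSubmodule R (diffWeight p) 0 := by
  let _ := WeightedHomogeneousSubmodule.gradedMonoid (R := R) (w := diffWeight p)
  show Algebra.adjoin R _ ≤ SetLike.GradeZero.subalgebra (weightedHomogeneousSubmodule R _)
  refine Algebra.adjoin_le ?_
  rintro _ (rfl | rfl | rfl) <;> show IsWeightedHomogeneous _ _ (0 : ZMod p)
  · simpa using isWeightedHomogeneous_X_zero_pow R p p
  · simpa using isWeightedHomogeneous_X_one_pow R p p
  · simpa using (isWeightedHomogeneous_X_zero_pow R p 1).mul (isWeightedHomogeneous_X_one_pow R p 1)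

end MvPolynomial

set_option synthInstance.maxHeartbeats 400000 in
theorem quotient_module_direct_sum_general
    (k : Type) [Field k] (p : ℕ) [Fact p.Prime] :
    let A := MvPolynomial (Fin 2) k
    let x : A := X 0
    let y : A := X 1
    let Ap : Subalgebra k A := Algebra.adjoin k {x ^ p, y ^ p, x * y}
    let q : A → A ⧸ (Submodule.span (↥Ap) ({1} : Set A)) :=
      Submodule.Quotient.mk
    let M : Fin (p - 1) → Submodule (↥Ap) (A ⧸ (Submodule.span (↥Ap) ({1} : Set A))) :=
      fun j => Submodule.span (↥Ap) {q (x ^ (j.1 + 1)), q (y ^ (p - (j.1 + 1)))}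
    DirectSum.IsInternal M := by
  intro A x y Ap q M
  have : NeZero p := ⟨(Fact.out : p.Prime).ne_zero⟩
  let _ := weightedGradedAlgebra k (diffWeight p)
  have hM (j : Fin (p - 1)) : {q (x ^ (j.1 + 1)), q (y ^ (p - (j.1 + 1)))} ⊆
      Submodule.Quotient.mk '' (weightedHomogeneousSubmodule k (diffWeight p) (j.1 + 1 : ℕ)) :=
    Set.insert_subset_iff.mpr ⟨Set.mem_image_of_mem _ (isWeightedHomogeneous_X_zero_pow k p _),
      Set.singleton_subset_iff.mpr <| Set.mem_image_of_mem _ <|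
        isWeightedHomogeneous_X_one_pow_sub k p (by omega)⟩
  refine (DirectSum.isInternal_submodule_iff_iSupIndep_and_iSup_eq_top M).mpr ⟨?_, ?_⟩
  · exact GradedAlgebra.iSupIndep_span_of_subset_mk_image _
      (adjoin_le_weightedHomogeneousSubmodule_zero k p) _
      (ZMod.natCast_val_add_one_injective p) ZMod.natCast_val_add_one_ne_zero _ hM
  · have hcomap : (⨆ j, M j).comap (Submodule.mkQ _) = ⊤ := by
      refine submodule_eq_top_of_monomial_one_mem _ fun d => ?_
      rw [monomial_one_fin_two]
      refine pow_mul_pow_mem_of_generators_mem x y _ ?_ (fun i hi => ⟨?_, ?_⟩) _ _ <;>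
        rw [Submodule.mem_comap, Submodule.mkQ_apply]
      · rw [(Submodule.Quotient.mk_eq_zero _).mpr (Submodule.mem_span_singleton_self _)]
        exact zero_mem _
      all_goals
        exact Submodule.mem_iSup_of_mem (p := M) ⟨i, by omega⟩ (Submodule.subset_span (by simp [q]))
    rw [← Submodule.map_comap_eq_of_surjective (Submodule.mkQ_surjective _) (⨆ j, M j), hcomap,
      Submodule.map_top, Submodule.range_mkQ]

set_option maxHeartbeats 1000000 in
set_option synthInstance.maxHeartbeats 400000 in
/-- For a perfect field `k` of characteristic `p > 0`,
`A = k[x,y]` and `Aᵖ ⊆ A` the `k`-subalgebra generated by `x^p, y^p, xy`,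
the `Aᵖ`-module `A/Aᵖ` is the internal direct sum `⨁_{i=1}^{p-1} M_i`,
where `M_i` is the `Aᵖ`-submodule generated by the images of `x^i` and
`y^(p-i)`.  (Here `i = j + 1` for `j : Fin (p-1)`.) -/
theorem quotient_module_direct_sum
    (k : Type) [Field k] (p : ℕ) [Fact p.Prime] [CharP k p] [PerfectRing k p] :
    let A := MvPolynomial (Fin 2) k
    let x : A := X 0
    let y : A := X 1
    let Ap : Subalgebra k A := Algebra.adjoin k {x ^ p, y ^ p, x * y}
    let q : A → A ⧸ (Submodule.span (↥Ap) ({1} : Set A)) :=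
      Submodule.Quotient.mk
    let M : Fin (p - 1) → Submodule (↥Ap) (A ⧸ (Submodule.span (↥Ap) ({1} : Set A))) :=
      fun j => Submodule.span (↥Ap) {q (x ^ (j.1 + 1)), q (y ^ (p - (j.1 + 1)))}
    DirectSum.IsInternal M :=
  quotient_module_direct_sum_general k p
end
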